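/- arXiv:1107.2629 — 6 statements merged into one kernel-verified Lean document; each statement's English description precedes it below -/
import Mathlib

section
/- For every family A : ℤ → B(H₁) of bounded operators with C := sup_n ‖A n‖ < ∞ there exists a unique bounded operator T_A on H₁ ⊗ H₂ such that T_A(ξ ⊗ (E n)η) = (A n ξ) ⊗ ((E n)η) for all n ∈ ℤ, ξ ∈ H₁, η ∈ H₂, and ‖T_A‖ ≤ C. Moreover, for two such uniformly bounded families A and B one has T_A ∘ T_B = T_{A·B}, where (A·B) n := (A n) ∘ (B n). -/
noncomputable section

/-- The completed Hilbert space tensor product of two complex Hilbert spaces,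
realized abstractly: a Hilbert space `HT` together with a continuous bilinear
map `tmul` whose elementary tensors have dense span and multiply inner
products, and the induced operator `map a b = a ⊗ b` on `HT`, determined by
`(a ⊗ b)(ξ ⊗ η) = (a ξ) ⊗ (b η)`. -/
structure HilbertTensor (H₁ H₂ HT : Type*)
    [NormedAddCommGroup H₁] [InnerProductSpace ℂ H₁] [CompleteSpace H₁]
    [NormedAddCommGroup H₂] [InnerProductSpace ℂ H₂] [CompleteSpace H₂]
    [NormedAddCommGroup HT] [InnerProductSpace ℂ HT] [CompleteSpace HT] :
    Type _ where
  tmul : H₁ →L[ℂ] H₂ →L[ℂ] HT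
  inner_tmul : ∀ (ξ ξ' : H₁) (η η' : H₂),
    (inner ℂ (tmul ξ η) (tmul ξ' η') : ℂ) = (inner ℂ ξ ξ' : ℂ) * (inner ℂ η η' : ℂ)
  dense_span : Dense (↑(Submodule.span ℂ {z : HT | ∃ ξ η, z = tmul ξ η}) : Set HT)
  map : (H₁ →L[ℂ] H₁) → (H₂ →L[ℂ] H₂) → (HT →L[ℂ] HT)
  map_tmul : ∀ (a : H₁ →L[ℂ] H₁) (b : H₂ →L[ℂ] H₂) (ξ : H₁) (η : H₂),
    map a b (tmul ξ η) = tmul (a ξ) (b η)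

/-- The von Neumann algebra generated by a set of operators: its double commutant. -/
def genVN {M : Type*} [Mul M] (S : Set M) : Set M :=
  Set.centralizer (Set.centralizer S)

/-- `adExp a z = e^{a} z e^{-a}`, i.e. `Ad(e^a)(z)`. -/
def adExp {A : Type*} [NormedRing A] [NormedAlgebra ℂ A] [CompleteSpace A]
    (a z : A) : A :=
  NormedSpace.exp a * z * NormedSpace.exp (-a)

/-! The operator is `T x = ∑ n, (A n ⊗ 1) ((1 ⊗ E n) x)`. The `1 ⊗ E n` are pairwise orthogonal
projections commuting with `A n ⊗ 1`, so the summands are pairwise orthogonal and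
`‖T x‖² ≤ C² ∑ ‖(1 ⊗ E n) x‖² ≤ C² ‖x‖²`; here `‖A n ⊗ 1‖ ≤ ‖A n‖` because `a ↦ a ⊗ 1` is a
⋆-homomorphism of C⋆-algebras. Since the vectors `ξ ⊗ E n η` sum to `ξ ⊗ η` and elementary tensors
span a dense subspace, an operator is determined by its values on the `ξ ⊗ E n η`; this gives
uniqueness, the norm bound for every such operator, and `T_A ∘ T_B = T_{A·B}`. -/

open ContinuousLinearMap

theorem IsStarProjection.sum {R ι : Type*} [NonUnitalNonAssocSemiring R] [StarRing R]
    {p : ι → R} (hp : ∀ i, IsStarProjection (p i)) (horth : Pairwise fun i j => p i * p j = 0)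
    (t : Finset ι) : IsStarProjection (∑ i ∈ t, p i) := by
  classical
  induction t using Finset.induction_on with
  | empty => simp [IsStarProjection.zero]
  | insert i t hi ih =>
    rw [Finset.sum_insert hi]
    refine (hp i).add ih ?_
    rw [Finset.mul_sum]
    exact Finset.sum_eq_zero fun j hj => horth (ne_of_mem_of_not_mem hj hi).symm

section OrthogonalProjections

variable {G ι : Type*} [NormedAddCommGroup G] [InnerProductSpace ℂ G] [CompleteSpace G]
  {F : ι → G →L[ℂ] G}

theorem isOrtho_range_of_mul_eq_zero {p q : G →L[ℂ] G} (hp : IsSelfAdjoint p) (hpq : p * q = 0) :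
    LinearMap.range (p : G →ₗ[ℂ] G) ⟂ LinearMap.range (q : G →ₗ[ℂ] G) := by
  rw [Submodule.isOrtho_iff_inner_eq]
  rintro _ ⟨y, rfl⟩ _ ⟨z, rfl⟩
  rw [coe_coe, coe_coe, ← adjoint_inner_right, ← star_eq_adjoint, hp.star_eq,
    ← mul_apply_eq_comp, hpq, zero_apply, inner_zero_right]

theorem orthogonalFamily_range (hF : ∀ i, IsStarProjection (F i))
    (horth : Pairwise fun i j => F i * F j = 0) :
    OrthogonalFamily ℂ (fun i => LinearMap.range (F i : G →ₗ[ℂ] G))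
      fun i => (LinearMap.range (F i : G →ₗ[ℂ] G)).subtypeₗᵢ :=
  .of_pairwise fun _ _ hij => isOrtho_range_of_mul_eq_zero (hF _).isSelfAdjoint (horth hij)

theorem sum_norm_sq_apply_le (hF : ∀ i, IsStarProjection (F i))
    (horth : Pairwise fun i j => F i * F j = 0) (x : G) (t : Finset ι) :
    ∑ i ∈ t, ‖F i x‖ ^ 2 ≤ ‖x‖ ^ 2 := by
  have hsum : ‖(∑ i ∈ t, F i) x‖ ^ 2 = ∑ i ∈ t, ‖F i x‖ ^ 2 := by
    simpa [sum_apply] using (orthogonalFamily_range hF horth).norm_sum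
      (fun i => ⟨F i x, LinearMap.mem_range_self _ x⟩) t
  rw [← hsum]
  gcongr
  simpa using (∑ i ∈ t, F i).le_of_opNorm_le ((IsStarProjection.sum hF horth t).norm_le) x

theorem exists_hasSum_mul_apply (hF : ∀ i, IsStarProjection (F i))
    (horth : Pairwise fun i j => F i * F j = 0) {L : ι → G →L[ℂ] G}
    (hLF : ∀ i, Commute (L i) (F i)) {C : ℝ} (hC : 0 ≤ C) (hL : ∀ i, ‖L i‖ ≤ C) :
    ∃ T : G →L[ℂ] G, ‖T‖ ≤ C ∧ ∀ x, HasSum (fun i => (L i * F i) x) (T x) := by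
  have hV := orthogonalFamily_range hF horth
  let l (x : G) (i : ι) : LinearMap.range (F i : G →ₗ[ℂ] G) :=
    ⟨(L i * F i) x, by rw [(hLF i).eq]; exact LinearMap.mem_range_self _ _⟩
  have hl (x : G) (t : Finset ι) : ∑ i ∈ t, ‖l x i‖ ^ 2 ≤ (C * ‖x‖) ^ 2 :=
    calc ∑ i ∈ t, ‖l x i‖ ^ 2 ≤ ∑ i ∈ t, C ^ 2 * ‖F i x‖ ^ 2 := by
          gcongr with i
          rw [← mul_pow]
          exact pow_le_pow_left₀ (norm_nonneg _) ((L i).le_of_opNorm_le (hL i) _) 2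
      _ ≤ C ^ 2 * ‖x‖ ^ 2 := by
          rw [← Finset.mul_sum]
          exact mul_le_mul_of_nonneg_left (sum_norm_sq_apply_le hF horth x t) (sq_nonneg C)
      _ = (C * ‖x‖) ^ 2 := by ring
  have hsum (x : G) : Summable fun i => (L i * F i) x :=
    (hV.summable_iff_norm_sq_summable (l x)).mpr
      (summable_of_sum_le (fun _ => sq_nonneg _) (hl x))
  have hpartial (x : G) (t : Finset ι) : ‖∑ i ∈ t, (L i * F i) x‖ ≤ C * ‖x‖ := by
    rw [← sq_le_sq₀ (norm_nonneg _) (by positivity)]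
    exact (hV.norm_sum (l x) t).trans_le (hl x t)
  let T : G →ₗ[ℂ] G :=
    { toFun x := ∑' i, (L i * F i) x
      map_add' x y := by simp only [map_add]; exact (hsum x).tsum_add (hsum y)
      map_smul' c x := by simp only [map_smul]; exact (hsum x).tsum_const_smul c }
  have hT (x : G) : ‖T x‖ ≤ C * ‖x‖ := le_of_tendsto' (hsum x).hasSum.norm (hpartial x)
  exact ⟨T.mkContinuous C hT, LinearMap.mkContinuous_norm_le _ hC _, fun x => (hsum x).hasSum⟩

end OrthogonalProjections

namespace HilbertTensor

variable {H₁ H₂ HT : Type*}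
    [NormedAddCommGroup H₁] [InnerProductSpace ℂ H₁] [CompleteSpace H₁]
    [NormedAddCommGroup H₂] [InnerProductSpace ℂ H₂] [CompleteSpace H₂]
    [NormedAddCommGroup HT] [InnerProductSpace ℂ HT] [CompleteSpace HT]
    (P : HilbertTensor H₁ H₂ HT)

theorem ext_tmul {K : Type*} [NormedAddCommGroup K] [NormedSpace ℂ K] {f g : HT →L[ℂ] K}
    (h : ∀ ξ η, f (P.tmul ξ η) = g (P.tmul ξ η)) : f = g := by
  have hspan : Set.EqOn f g (Submodule.span ℂ {z : HT | ∃ ξ η, z = P.tmul ξ η}) :=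
    LinearMap.eqOn_span (by rintro _ ⟨ξ, η, rfl⟩; exact h ξ η)
  exact ContinuousLinearMap.ext fun x =>
    congrFun (Continuous.ext_on P.dense_span f.continuous g.continuous hspan) x

theorem ext_tmul_of_hasSum {ι K : Type*} [NormedAddCommGroup K] [NormedSpace ℂ K]
    {E : ι → H₂ →L[ℂ] H₂} (hE : ∀ η, HasSum (fun n => E n η) η) {f g : HT →L[ℂ] K}
    (h : ∀ n ξ η, f (P.tmul ξ (E n η)) = g (P.tmul ξ (E n η))) : f = g := by
  refine P.ext_tmul fun ξ η => ?_
  have hsum := (P.tmul ξ).hasSum (hE η)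
  exact (f.hasSum hsum).unique (by simpa only [h] using g.hasSum hsum)

theorem ext_inner_tmul {v w : HT} (h : ∀ ξ η, inner ℂ v (P.tmul ξ η) = inner ℂ w (P.tmul ξ η)) :
    v = w :=
  ext_inner_right ℂ fun z => congr($(P.ext_tmul (f := innerSL ℂ v) (g := innerSL ℂ w) h) z)

theorem map_mul_map (a a' : H₁ →L[ℂ] H₁) (b b' : H₂ →L[ℂ] H₂) :
    P.map a b * P.map a' b' = P.map (a * a') (b * b') :=
  P.ext_tmul fun ξ η => by simp [P.map_tmul]

theorem star_map (a : H₁ →L[ℂ] H₁) (b : H₂ →L[ℂ] H₂) :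
    star (P.map a b) = P.map (star a) (star b) :=
  P.ext_tmul fun ξ η => P.ext_inner_tmul fun ξ' η' => by
    simp only [star_eq_adjoint, adjoint_inner_left, P.map_tmul, P.inner_tmul]

def mapLeft : (H₁ →L[ℂ] H₁) →⋆ₐ[ℂ] (HT →L[ℂ] HT) where
  toFun a := P.map a 1
  map_one' := P.ext_tmul fun ξ η => by simp [P.map_tmul]
  map_mul' a a' := by rw [map_mul_map, one_mul]
  map_zero' := P.ext_tmul fun ξ η => by simp [P.map_tmul]
  map_add' a a' := P.ext_tmul fun ξ η => by simp [P.map_tmul]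
  commutes' c := P.ext_tmul fun ξ η => by simp [P.map_tmul, Algebra.algebraMap_eq_smul_one]
  map_star' a := by rw [star_map, star_one]

def mapRight : (H₂ →L[ℂ] H₂) →⋆ₐ[ℂ] (HT →L[ℂ] HT) where
  toFun b := P.map 1 b
  map_one' := P.ext_tmul fun ξ η => by simp [P.map_tmul]
  map_mul' b b' := by rw [map_mul_map, one_mul]
  map_zero' := P.ext_tmul fun ξ η => by simp [P.map_tmul]
  map_add' b b' := P.ext_tmul fun ξ η => by simp [P.map_tmul]
  commutes' c := P.ext_tmul fun ξ η => by simp [P.map_tmul, Algebra.algebraMap_eq_smul_one]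
  map_star' b := by rw [star_map, star_one]

theorem mapLeft_mul_mapRight (a : H₁ →L[ℂ] H₁) (b : H₂ →L[ℂ] H₂) :
    P.mapLeft a * P.mapRight b = P.map a b := by
  simp [mapLeft, mapRight, map_mul_map]

theorem mapRight_mul_mapLeft (a : H₁ →L[ℂ] H₁) (b : H₂ →L[ℂ] H₂) :
    P.mapRight b * P.mapLeft a = P.map a b := by
  simp [mapLeft, mapRight, map_mul_map]

theorem exists_diagonal_of_isStarProjection {ι : Type*} {E : ι → H₂ →L[ℂ] H₂}
    (hE : ∀ n, IsStarProjection (E n)) (horth : Pairwise fun m n => E m * E n = 0)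
    {A : ι → H₁ →L[ℂ] H₁} {C : ℝ} (hC : 0 ≤ C) (hA : ∀ n, ‖A n‖ ≤ C) :
    ∃ T : HT →L[ℂ] HT, ‖T‖ ≤ C ∧ ∀ n ξ η, T (P.tmul ξ (E n η)) = P.tmul (A n ξ) (E n η) := by
  obtain ⟨T, hTC, hT⟩ := exists_hasSum_mul_apply
    (F := fun n => P.mapRight (E n)) (L := fun n => P.mapLeft (A n))
    (fun n => (hE n).map P.mapRight)
    (fun m n hmn => show _ = _ by rw [← map_mul, horth hmn, map_zero])
    (fun n => by rw [Commute, SemiconjBy, mapLeft_mul_mapRight, mapRight_mul_mapLeft]) hC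
    (fun n => (NonUnitalStarAlgHom.norm_apply_le P.mapLeft (A n)).trans (hA n))
  refine ⟨T, hTC, fun n ξ η => (hT _).unique ?_⟩
  simp only [mapLeft_mul_mapRight, P.map_tmul, ← mul_apply_eq_comp]
  convert hasSum_single n fun m hmn => ?_
  · rw [(hE n).isIdempotentElem.eq]
  · rw [horth hmn, zero_apply, map_zero]

end HilbertTensor

/-- for a uniformly bounded family `A : ℤ → B(H₁)` there is a unique
bounded operator `T_A` on `H₁ ⊗ H₂` with `T_A(ξ ⊗ (E n)η) = (A n ξ) ⊗ ((E n)η)`,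
its norm is at most `C = sup ‖A n‖`, and `T_A ∘ T_B = T_{A·B}`. -/
theorem stmt1
    {H₁ H₂ HT : Type*}
    [NormedAddCommGroup H₁] [InnerProductSpace ℂ H₁] [CompleteSpace H₁]
    [NormedAddCommGroup H₂] [InnerProductSpace ℂ H₂] [CompleteSpace H₂]
    [NormedAddCommGroup HT] [InnerProductSpace ℂ HT] [CompleteSpace HT]
    (P : HilbertTensor H₁ H₂ HT)
    (E : ℤ → (H₂ →L[ℂ] H₂))
    (hE_idem : ∀ n, IsIdempotentElem (E n))
    (hE_sa : ∀ n, IsSelfAdjoint (E n))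
    (hE_orth : ∀ m n, m ≠ n → E m * E n = 0)
    (hE_sum : ∀ η : H₂, HasSum (fun n => E n η) η) :
    (∀ (A : ℤ → (H₁ →L[ℂ] H₁)) (C : ℝ), (∀ n, ‖A n‖ ≤ C) →
      (∃! T : HT →L[ℂ] HT, ∀ (n : ℤ) (ξ : H₁) (η : H₂),
        T (P.tmul ξ (E n η)) = P.tmul (A n ξ) (E n η)) ∧
      (∀ T : HT →L[ℂ] HT,
        (∀ (n : ℤ) (ξ : H₁) (η : H₂),
          T (P.tmul ξ (E n η)) = P.tmul (A n ξ) (E n η)) → ‖T‖ ≤ C)) ∧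
    (∀ (A B : ℤ → (H₁ →L[ℂ] H₁)) (CA CB : ℝ),
      (∀ n, ‖A n‖ ≤ CA) → (∀ n, ‖B n‖ ≤ CB) →
      ∀ (TA TB TAB : HT →L[ℂ] HT),
        (∀ (n : ℤ) (ξ : H₁) (η : H₂),
          TA (P.tmul ξ (E n η)) = P.tmul (A n ξ) (E n η)) →
        (∀ (n : ℤ) (ξ : H₁) (η : H₂),
          TB (P.tmul ξ (E n η)) = P.tmul (B n ξ) (E n η)) →
        (∀ (n : ℤ) (ξ : H₁) (η : H₂),
          TAB (P.tmul ξ (E n η)) = P.tmul ((A n ∘L B n) ξ) (E n η)) →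
        TA ∘L TB = TAB) := by
  have hE : ∀ n, IsStarProjection (E n) := fun n => ⟨hE_idem n, hE_sa n⟩
  refine ⟨fun A C hA => ?_, fun A B _ _ _ _ TA TB TAB hTA hTB hTAB => ?_⟩
  · obtain ⟨T, hTC, hT⟩ := P.exists_diagonal_of_isStarProjection hE (fun m n => hE_orth m n)
      ((norm_nonneg _).trans (hA 0)) hA
    have hunique : ∀ T' : HT →L[ℂ] HT, (∀ n ξ η,
        T' (P.tmul ξ (E n η)) = P.tmul (A n ξ) (E n η)) → T' = T :=
      fun T' hT' => P.ext_tmul_of_hasSum hE_sum fun n ξ η => by rw [hT', hT]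
    exact ⟨⟨T, hT, hunique⟩, fun T' hT' => hunique T' hT' ▸ hTC⟩
  · exact P.ext_tmul_of_hasSum hE_sum fun n ξ η => by simp only [comp_apply, hTB, hTA, hTAB]
end
end

section
/- Let x, x' be bounded operators on H. If x commutes with V(κ s) x' V(κ s)* for every s ∈ ℤ with E s ≠ 0, then x ⊗ 1 commutes with U_κ (x' ⊗ 1) U_κ*, and 1 ⊗ x commutes with U_κ (1 ⊗ x') U_κ*. -/
noncomputable section

/-!
On a tensor `ξ ⊗ η` with `η ∈ ran E s` the unitary `U_κ` acts as `V(κ s) ⊗ 1`, because both act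
on `E m ξ ⊗ η` by the phase `e^{iκms}`. Hence on `H ⊗ ran E s` conjugation by `U_κ` turns
`x' ⊗ 1` into `(V(κ s) x' V(κ s)*) ⊗ 1`, which commutes with `x ⊗ 1` by hypothesis, and these
subspaces together span a dense subspace of `H ⊗ H`. The second claim is the same argument with
the two tensor slots exchanged, so the argument is run for a bilinear map `B` whose first slot
carries the decomposition: `B = P.tmul.flip` for `x ⊗ 1` and `B = P.tmul` for `1 ⊗ x`.
-/

open ContinuousLinearMap

section Decomposition

variable {ι R M N : Type*} [Semiring R] [AddCommMonoid M] [TopologicalSpace M] [Module R M]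
  [AddCommMonoid N] [TopologicalSpace N] [T2Space N] [Module R N] {E : ι → M →L[R] M}

theorem ContinuousLinearMap.ext_of_hasSum_decomposition
    (hE_sum : ∀ ξ, HasSum (fun n => E n ξ) ξ) {S T : M →L[R] N}
    (h : ∀ n ξ, S (E n ξ) = T (E n ξ)) : S = T := by
  ext ξ
  exact (S.hasSum (hE_sum ξ)).unique (by simpa only [h] using T.hasSum (hE_sum ξ))

theorem ContinuousLinearMap.comp_eq_comp_of_eigenvalues
    (hE_sum : ∀ ξ, HasSum (fun n => E n ξ) ξ) {L : M →L[R] N} {U : N →L[R] N}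
    {V : M →L[R] M} (c : ι → R) (hV : ∀ n ξ, V (E n ξ) = c n • E n ξ)
    (hU : ∀ n ξ, U (L (E n ξ)) = c n • L (E n ξ)) : U ∘L L = L ∘L V :=
  ext_of_hasSum_decomposition hE_sum fun n ξ => by simp only [comp_apply, hU, hV, map_smul]

end Decomposition

theorem commute_of_intertwining {ι H K : Type*}
    [NormedAddCommGroup H] [NormedSpace ℂ H] [NormedAddCommGroup K] [NormedSpace ℂ K]
    {B : H →L[ℂ] H →L[ℂ] K} (hB : Dense (Submodule.span ℂ {z : K | ∃ η ζ, z = B η ζ} : Set K))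
    {E : ι → H →L[ℂ] H} (hE_sum : ∀ ξ, HasSum (fun n => E n ξ) ξ)
    {X W : K →L[ℂ] K} {x : H →L[ℂ] H} {w : ι → H →L[ℂ] H}
    (hX : ∀ η, X ∘L B η = B η ∘L x)
    (hW : ∀ s η, η ∈ Set.range (E s) → W ∘L B η = B η ∘L w s)
    (hxw : ∀ s, E s ≠ 0 → Commute x (w s)) : Commute X W := by
  refine ext_on hB ?_
  rintro _ ⟨η, ζ, rfl⟩
  suffices (X * W) ∘L B.flip ζ = (W * X) ∘L B.flip ζ from congr($this η)
  refine ext_of_hasSum_decomposition hE_sum fun s η => ?_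
  by_cases hs : E s = 0
  · simp [hs]
  have hη : E s η ∈ Set.range (E s) := ⟨η, rfl⟩
  have key : (X * W) ∘L B (E s η) = (W * X) ∘L B (E s η) :=
    calc (X * W) ∘L B (E s η) = B (E s η) ∘L (x * w s) := by
          simp only [mul_def, comp_assoc, hW s _ hη]
          simp only [← comp_assoc, hX]
      _ = B (E s η) ∘L (w s * x) := by rw [(hxw s hs).eq]
      _ = (W * X) ∘L B (E s η) := by
          simp only [mul_def, comp_assoc, hX]
          simp only [← comp_assoc, hW s _ hη]
  exact congr($key ζ)

section Unitary

variable {H K : Type*} [NormedAddCommGroup H] [InnerProductSpace ℂ H] [CompleteSpace H]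
  [NormedAddCommGroup K] [InnerProductSpace ℂ K] [CompleteSpace K]

theorem ContinuousLinearMap.star_comp_eq_comp_star
    {L : H →L[ℂ] K} {U : K →L[ℂ] K} {V : H →L[ℂ] H}
    (hU : U ∈ unitary (K →L[ℂ] K)) (hV : V ∈ unitary (H →L[ℂ] H))
    (h : U ∘L L = L ∘L V) : star U ∘L L = L ∘L star V :=
  calc star U ∘L L = star U ∘L L ∘L (V * star V) := by
        rw [Unitary.mul_star_self_of_mem hV, one_def, comp_id]
    _ = star U ∘L (U ∘L L) ∘L star V := by rw [mul_def, ← comp_assoc L, h]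
    _ = L ∘L star V := by
        rw [← comp_assoc, ← comp_assoc, ← mul_def, Unitary.star_mul_self_of_mem hU, one_def,
          id_comp]

theorem commute_conj_of_phase
    {B : H →L[ℂ] H →L[ℂ] K} (hB : Dense (Submodule.span ℂ {z : K | ∃ η ζ, z = B η ζ} : Set K))
    {E : ℤ → H →L[ℂ] H} (hE_sum : ∀ ξ, HasSum (fun n => E n ξ) ξ)
    {V : ℝ → (H →L[ℂ] H)} (hV_unitary : ∀ t, V t ∈ unitary (H →L[ℂ] H))
    (hV_eig : ∀ (t : ℝ) (n : ℤ) (ξ : H), ξ ∈ Set.range (E n) →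
      V t ξ = Complex.exp (Complex.I * n * t) • ξ)
    {κ : ℝ} {U : K →L[ℂ] K} (hU_unitary : U ∈ unitary (K →L[ℂ] K))
    (hU_eig : ∀ (s m : ℤ) (η ζ : H), η ∈ Set.range (E s) → ζ ∈ Set.range (E m) →
      U (B η ζ) = Complex.exp (Complex.I * κ * s * m) • B η ζ)
    {M : (H →L[ℂ] H) → (K →L[ℂ] K)} (hM : ∀ a η, M a ∘L B η = B η ∘L a)
    {x x' : H →L[ℂ] H}
    (hcomm : ∀ s : ℤ, E s ≠ 0 → Commute x (V (κ * s) * x' * star (V (κ * s)))) :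
    Commute (M x) (U * M x' * star U) := by
  refine commute_of_intertwining hB hE_sum (hM x) (fun s η hη => ?_) hcomm
  have hUB : U ∘L B η = B η ∘L V (κ * s) := by
    refine comp_eq_comp_of_eigenvalues hE_sum (fun m => Complex.exp (Complex.I * m * (κ * s)))
      (fun m ξ => by exact_mod_cast hV_eig _ m _ ⟨ξ, rfl⟩) fun m ξ => ?_
    rw [hU_eig s m η _ hη ⟨ξ, rfl⟩]
    congr 2
    ring
  have hUB' := star_comp_eq_comp_star hU_unitary (hV_unitary _) hUB
  simp only [mul_def, comp_assoc]
  rw [hUB', ← comp_assoc (M x'), hM]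
  simp only [← comp_assoc]
  rw [hUB]

end Unitary

theorem stmt3_general
    {H HT : Type*}
    [NormedAddCommGroup H] [InnerProductSpace ℂ H] [CompleteSpace H]
    [NormedAddCommGroup HT] [InnerProductSpace ℂ HT] [CompleteSpace HT]
    (P : HilbertTensor H H HT)
    (E : ℤ → (H →L[ℂ] H))
    (hE_sum : ∀ ξ : H, HasSum (fun n => E n ξ) ξ)
    (V : ℝ → (H →L[ℂ] H))
    (hV_unitary : ∀ t, V t ∈ unitary (H →L[ℂ] H))
    (hV_eig : ∀ (t : ℝ) (n : ℤ) (ξ : H), ξ ∈ Set.range ⇑(E n) →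
      V t ξ = Complex.exp (Complex.I * (n : ℂ) * (t : ℂ)) • ξ)
    (κ : ℝ) (U : HT →L[ℂ] HT)
    (hU_unitary : U ∈ unitary (HT →L[ℂ] HT))
    (hU_eig : ∀ (m n : ℤ) (ξ η : H), ξ ∈ Set.range ⇑(E m) → η ∈ Set.range ⇑(E n) →
      U (P.tmul ξ η) = Complex.exp (Complex.I * (κ : ℂ) * (m : ℂ) * (n : ℂ)) • P.tmul ξ η)
    (x x' : H →L[ℂ] H)
    (hcomm : ∀ s : ℤ, E s ≠ 0 →
      Commute x (V (κ * (s : ℝ)) * x' * star (V (κ * (s : ℝ))))) :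
    Commute (P.map x 1) (U * P.map x' 1 * star U) ∧
    Commute (P.map 1 x) (U * P.map 1 x' * star U) := by
  have hflip : {z : HT | ∃ η ζ, z = P.tmul.flip η ζ} = {z | ∃ ξ η, z = P.tmul ξ η} := by
    ext z
    simp only [flip_apply]
    exact exists_comm
  constructor
  · refine commute_conj_of_phase (hflip ▸ P.dense_span) hE_sum hV_unitary hV_eig hU_unitary
      (fun s m η ζ hη hζ => ?_) (M := (P.map · 1)) (fun a η => ext fun ζ => ?_) hcomm
    · simp only [flip_apply, hU_eig m s ζ η hζ hη, mul_right_comm _ (m : ℂ)]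
    · simp [P.map_tmul]
  · exact commute_conj_of_phase P.dense_span hE_sum hV_unitary hV_eig hU_unitary hU_eig
      (M := (P.map 1 ·)) (fun a η => ext fun ζ => by simp [P.map_tmul]) hcomm

/-- if `x` commutes with `V(κs) x' V(κs)*` for every `s ∈ ℤ` with
`E s ≠ 0`, then `x ⊗ 1` commutes with `U_κ (x' ⊗ 1) U_κ*` and `1 ⊗ x` commutes
with `U_κ (1 ⊗ x') U_κ*`. -/
theorem stmt3
    {H HT : Type*}
    [NormedAddCommGroup H] [InnerProductSpace ℂ H] [CompleteSpace H]
    [NormedAddCommGroup HT] [InnerProductSpace ℂ HT] [CompleteSpace HT]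
    (P : HilbertTensor H H HT)
    (E : ℤ → (H →L[ℂ] H))
    (hE_idem : ∀ n, IsIdempotentElem (E n))
    (hE_sa : ∀ n, IsSelfAdjoint (E n))
    (hE_orth : ∀ m n, m ≠ n → E m * E n = 0)
    (hE_sum : ∀ ξ : H, HasSum (fun n => E n ξ) ξ)
    (V : ℝ → (H →L[ℂ] H))
    (hV_unitary : ∀ t, V t ∈ unitary (H →L[ℂ] H))
    (hV_eig : ∀ (t : ℝ) (n : ℤ) (ξ : H), ξ ∈ Set.range ⇑(E n) →
      V t ξ = Complex.exp (Complex.I * (n : ℂ) * (t : ℂ)) • ξ)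
    (κ : ℝ) (U : HT →L[ℂ] HT)
    (hU_unitary : U ∈ unitary (HT →L[ℂ] HT))
    (hU_eig : ∀ (m n : ℤ) (ξ η : H), ξ ∈ Set.range ⇑(E m) → η ∈ Set.range ⇑(E n) →
      U (P.tmul ξ η) = Complex.exp (Complex.I * (κ : ℂ) * (m : ℂ) * (n : ℂ)) • P.tmul ξ η)
    (x x' : H →L[ℂ] H)
    (hcomm : ∀ s : ℤ, E s ≠ 0 →
      Commute x (V (κ * (s : ℝ)) * x' * star (V (κ * (s : ℝ))))) :
    Commute (P.map x 1) (U * P.map x' 1 * star U) ∧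
    Commute (P.map 1 x) (U * P.map 1 x' * star U) :=
  stmt3_general P E hE_sum V hV_unitary hV_eig κ U hU_unitary hU_eig x x' hcomm
end
end

section
/- Suppose Ω ∈ H satisfies Q Ω = 0. Then for all bounded operators x, y on H one has (x ⊗ 1) · (e^{i κ Q⊗Q} (1 ⊗ y) e^{-i κ Q⊗Q}) · (Ω ⊗ Ω) = (x Ω) ⊗ (y Ω). Consequently, if M₋ and M₊ are von Neumann algebras on H such that Ω ⊗ Ω is cyclic for the von Neumann algebra generated by {x ⊗ 1 : x ∈ M₋} ∪ {1 ⊗ y : y ∈ M₊}, then Ω ⊗ Ω is cyclic for the von Neumann algebra M_{Q,κ} generated by {x ⊗ 1 : x ∈ M₋} ∪ {e^{i κ Q⊗Q} (1 ⊗ y) e^{-i κ Q⊗Q} : y ∈ M₊}. -/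
/-!
Since `Q Ω = 0`, the generator `iκ Q⊗Q` kills every vector `Ω ⊗ η`, so `e^{±iκ Q⊗Q}` fixes
these vectors and `(x ⊗ 1) · Ad e^{iκ Q⊗Q}(1 ⊗ y)` maps `Ω ⊗ Ω` to `xΩ ⊗ yΩ`.

For cyclicity, let `K` be the closed span of the vectors `xΩ ⊗ yΩ` with `x ∈ M₋`, `y ∈ M₊`.
It is invariant under the adjoint-closed set `{x ⊗ 1} ∪ {1 ⊗ y}`, so its orthogonal projection
lies in the commutant of that set and `K` contains the orbit of `Ω ⊗ Ω` under the generated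
von Neumann algebra; hence `K` is everything. By the first part, the span of the `xΩ ⊗ yΩ` lies
in the orbit of `Ω ⊗ Ω` under `M_{Q,κ}`, which is therefore dense as well.
-/

noncomputable section

open Set Submodule Module.End ContinuousLinearMap

section NormedSpace

variable {𝕜 E : Type*} [RCLike 𝕜] [NormedAddCommGroup E] [NormedSpace 𝕜 E]

theorem NormedSpace.exp_apply_of_apply_eq_zero [CompleteSpace E] {A : E →L[𝕜] E} {v : E}
    (hv : A v = 0) : NormedSpace.exp A v = v := by
  have hsum := (NormedSpace.exp_series_hasSum_exp' (𝕂 := 𝕜) A).mapL (apply 𝕜 E v)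
  -- only the constant term of the exponential series survives on `v`
  refine hsum.unique ((hasSum_single 0 fun n hn => ?_).congr_fun fun _ => rfl) |>.trans ?_
  · obtain ⟨m, rfl⟩ := Nat.exists_eq_succ_of_ne_zero hn
    simp [pow_succ, hv]
  · simp

theorem span_subset_image_apply_centralizer {S : Set (E →L[𝕜] E)} {v : E} {G : Set E}
    (hG : G ⊆ (fun z : E →L[𝕜] E => z v) '' centralizer S) :
    (span 𝕜 G : Set E) ⊆ (fun z : E →L[𝕜] E => z v) '' centralizer S := by
  let orbit : Submodule 𝕜 E :=
    (Subalgebra.centralizer 𝕜 S).toSubmodule.map (apply 𝕜 E v).toLinearMap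
  have horbit : (orbit : Set E) = (fun z : E →L[𝕜] E => z v) '' centralizer S := by
    simp only [orbit, map_coe, Subalgebra.coe_toSubmodule, Subalgebra.coe_centralizer]
    rfl
  rw [← horbit] at hG ⊢
  exact span_le.mpr hG

end NormedSpace

theorem adExp_apply_of_apply_eq_zero {F : Type*} [NormedAddCommGroup F] [NormedSpace ℂ F]
    [CompleteSpace F] {a : F →L[ℂ] F} (z : F →L[ℂ] F) {v : F} (hv : a v = 0) :
    adExp a z v = NormedSpace.exp a (z v) := by
  have hv' : (-a) v = 0 := by rw [neg_apply, hv, neg_zero]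
  rw [adExp, mul_apply_eq_comp, mul_apply_eq_comp, NormedSpace.exp_apply_of_apply_eq_zero hv']

theorem Submodule.span_mem_invtSubmodule {R M : Type*} [CommSemiring R] [AddCommMonoid M]
    [Module R M] {f : Module.End R M} {s : Set M} (h : MapsTo f s s) :
    span R s ∈ invtSubmodule f :=
  (mem_invtSubmodule_iff_map_le f).mpr <| (map_span_le _ _ _).mpr fun _ hm => subset_span (h hm)

section Commutant

variable {𝕜 E : Type*} [RCLike 𝕜] [NormedAddCommGroup E] [InnerProductSpace 𝕜 E]
  [CompleteSpace E]

theorem Submodule.commute_starProjection_of_mem_invtSubmodule {K : Submodule 𝕜 E}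
    [K.HasOrthogonalProjection] {T : E →L[𝕜] E} (hT : K ∈ invtSubmodule T)
    (hT' : K ∈ invtSubmodule (adjoint T)) :
    Commute K.starProjection T := by
  refine K.isIdempotentElem_starProjection.commute_iff.mpr ⟨?_, ?_⟩
  · rwa [range_starProjection]
  · rwa [ker_starProjection, ← ContinuousLinearMap.mem_invtSubmodule_adjoint_iff]

theorem apply_mem_of_mem_centralizer_centralizer {S : Set (E →L[𝕜] E)}
    (hS : ∀ T ∈ S, adjoint T ∈ S) {K : Submodule 𝕜 E} [K.HasOrthogonalProjection]
    (hK : ∀ T ∈ S, K ∈ invtSubmodule T) {z : E →L[𝕜] E} (hz : z ∈ centralizer (centralizer S))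
    {v : E} (hv : v ∈ K) : z v ∈ K := by
  have hp : K.starProjection ∈ centralizer S := fun T hT =>
    (commute_starProjection_of_mem_invtSubmodule (hK T hT) (hK _ (hS T hT))).eq.symm
  have hzp : z * K.starProjection = K.starProjection * z := (hz _ hp).symm
  rw [← starProjection_eq_self_iff.mpr hv, ← mul_apply_eq_comp, hzp, mul_apply_eq_comp]
  exact K.starProjection_apply_mem _

end Commutant

namespace HilbertTensor

variable {H₁ H₂ HT : Type*}
  [NormedAddCommGroup H₁] [InnerProductSpace ℂ H₁] [CompleteSpace H₁]
  [NormedAddCommGroup H₂] [InnerProductSpace ℂ H₂] [CompleteSpace H₂]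
  [NormedAddCommGroup HT] [InnerProductSpace ℂ HT] [CompleteSpace HT]
  (P : HilbertTensor H₁ H₂ HT)

theorem map_mul_adExp_apply_tmul {Q₁ : H₁ →L[ℂ] H₁} (Q₂ : H₂ →L[ℂ] H₂) (c : ℂ) {Ω₁ : H₁}
    (hΩ₁ : Q₁ Ω₁ = 0) (Ω₂ : H₂) (x : H₁ →L[ℂ] H₁) (y : H₂ →L[ℂ] H₂) :
    (P.map x 1 * adExp (c • P.map Q₁ Q₂) (P.map 1 y)) (P.tmul Ω₁ Ω₂) = P.tmul (x Ω₁) (y Ω₂) := by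
  have hkill : ∀ w, (c • P.map Q₁ Q₂) (P.tmul Ω₁ w) = 0 := fun w => by
    rw [smul_apply, map_tmul, hΩ₁, map_zero, zero_apply, smul_zero]
  rw [mul_apply_eq_comp, adExp_apply_of_apply_eq_zero _ (hkill Ω₂), map_tmul, one_apply_eq_self,
    NormedSpace.exp_apply_of_apply_eq_zero (hkill _), map_tmul, one_apply_eq_self]

theorem adjoint_map (a : H₁ →L[ℂ] H₁) (b : H₂ →L[ℂ] H₂) :
    adjoint (P.map a b) = P.map (adjoint a) (adjoint b) := by
  refine ext_on P.dense_span ?_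
  rintro _ ⟨ξ, η, rfl⟩
  have h : (innerSL ℂ (P.tmul ξ η)).comp (P.map a b)
      = innerSL ℂ (P.map (adjoint a) (adjoint b) (P.tmul ξ η)) := by
    refine ext_on P.dense_span ?_
    rintro _ ⟨ξ', η', rfl⟩
    simp only [comp_apply, innerSL_apply_apply, map_tmul, inner_tmul, adjoint_inner_left]
  refine ext_inner_right ℂ fun w => ?_
  rw [adjoint_inner_left]
  exact congr($h w)

def ampliations (A₁ : Set (H₁ →L[ℂ] H₁)) (A₂ : Set (H₂ →L[ℂ] H₂)) : Set (HT →L[ℂ] HT) :=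
  (fun x => P.map x 1) '' A₁ ∪ (fun y => P.map 1 y) '' A₂

def productVectors (A₁ : Set (H₁ →L[ℂ] H₁)) (A₂ : Set (H₂ →L[ℂ] H₂)) (Ω₁ : H₁) (Ω₂ : H₂) :
    Set HT :=
  image2 (fun x y => P.tmul (x Ω₁) (y Ω₂)) A₁ A₂

variable {P} {M₁ : VonNeumannAlgebra H₁} {M₂ : VonNeumannAlgebra H₂}

theorem adjoint_mem_ampliations {T : HT →L[ℂ] HT} (hT : T ∈ P.ampliations M₁ M₂) :
    adjoint T ∈ P.ampliations M₁ M₂ := by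
  rcases hT with ⟨x, hx, rfl⟩ | ⟨y, hy, rfl⟩
  · exact Or.inl ⟨star x, star_mem hx, by rw [adjoint_map, adjoint_one, star_eq_adjoint]⟩
  · exact Or.inr ⟨star y, star_mem hy, by rw [adjoint_map, adjoint_one, star_eq_adjoint]⟩

theorem mapsTo_productVectors {T : HT →L[ℂ] HT} (hT : T ∈ P.ampliations M₁ M₂) (Ω₁ : H₁) (Ω₂ : H₂) :
    MapsTo T (P.productVectors M₁ M₂ Ω₁ Ω₂) (P.productVectors M₁ M₂ Ω₁ Ω₂) := by
  rintro _ ⟨x, hx, y, hy, rfl⟩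
  rcases hT with ⟨x', hx', rfl⟩ | ⟨y', hy', rfl⟩
  · exact ⟨x' * x, mul_mem hx' hx, y, hy, by rw [map_tmul, one_apply_eq_self]; rfl⟩
  · exact ⟨x, hx, y' * y, mul_mem hy' hy, by rw [map_tmul, one_apply_eq_self]; rfl⟩

theorem apply_tmul_mem_topologicalClosure_span {z : HT →L[ℂ] HT}
    (hz : z ∈ genVN (P.ampliations M₁ M₂)) (Ω₁ : H₁) (Ω₂ : H₂) :
    z (P.tmul Ω₁ Ω₂) ∈ (span ℂ (P.productVectors M₁ M₂ Ω₁ Ω₂)).topologicalClosure := by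
  refine apply_mem_of_mem_centralizer_centralizer (fun _ => adjoint_mem_ampliations)
    (fun T hT => ?_) hz (le_topologicalClosure _ (subset_span ?_))
  · exact topologicalClosure_mem_invtSubmodule <|
      span_mem_invtSubmodule (mapsTo_productVectors hT Ω₁ Ω₂)
  · exact ⟨1, one_mem _, 1, one_mem _, rfl⟩

end HilbertTensor

theorem stmt6_general
    {H HT : Type*}
    [NormedAddCommGroup H] [InnerProductSpace ℂ H] [CompleteSpace H]
    [NormedAddCommGroup HT] [InnerProductSpace ℂ HT] [CompleteSpace HT]
    (P : HilbertTensor H H HT)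
    (Q : H →L[ℂ] H) (κ : ℝ)
    (Ω : H) (hΩ : Q Ω = 0) :
    (∀ x y : H →L[ℂ] H,
      (P.map x 1 * adExp ((Complex.I * (κ : ℂ)) • P.map Q Q) (P.map 1 y))
          (P.tmul Ω Ω)
        = P.tmul (x Ω) (y Ω)) ∧
    (∀ Mm Mp : VonNeumannAlgebra H,
      Dense ((fun z : HT →L[ℂ] HT => z (P.tmul Ω Ω)) ''
        genVN ((fun x : H →L[ℂ] H => P.map x 1) '' (Mm : Set (H →L[ℂ] H)) ∪
               (fun y : H →L[ℂ] H => P.map 1 y) '' (Mp : Set (H →L[ℂ] H)))) →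
      Dense ((fun z : HT →L[ℂ] HT => z (P.tmul Ω Ω)) ''
        genVN ((fun x : H →L[ℂ] H => P.map x 1) '' (Mm : Set (H →L[ℂ] H)) ∪
               (fun y : H →L[ℂ] H =>
                  adExp ((Complex.I * (κ : ℂ)) • P.map Q Q) (P.map 1 y)) ''
                 (Mp : Set (H →L[ℂ] H))))) := by
  have hprod := P.map_mul_adExp_apply_tmul Q (Complex.I * κ) hΩ Ω
  refine ⟨hprod, fun Mm Mp hcyc => ?_⟩
  have hdense : Dense (span ℂ (P.productVectors Mm Mp Ω Ω) : Set HT) := by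
    rw [← dense_closure, ← topologicalClosure_coe]
    exact hcyc.mono <|
      image_subset_iff.mpr fun z hz => HilbertTensor.apply_tmul_mem_topologicalClosure_span hz Ω Ω
  refine hdense.mono (span_subset_image_apply_centralizer ?_)
  rintro _ ⟨x, hx, y, hy, rfl⟩
  exact ⟨_, mul_mem_centralizer (subset_centralizer_centralizer (Or.inl (mem_image_of_mem _ hx)))
    (subset_centralizer_centralizer (Or.inr (mem_image_of_mem _ hy))), hprod x y⟩

/-- if `Q Ω = 0`, then
`(x ⊗ 1) · Ad e^{iκQ⊗Q}(1 ⊗ y) (Ω ⊗ Ω) = xΩ ⊗ yΩ`; consequently cyclicity of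
`Ω ⊗ Ω` for the algebra generated by `{x⊗1} ∪ {1⊗y}` implies cyclicity for
`M_{Q,κ}`, generated by `{x⊗1} ∪ {Ad e^{iκQ⊗Q}(1⊗y)}`. -/
theorem stmt6
    {H HT : Type*}
    [NormedAddCommGroup H] [InnerProductSpace ℂ H] [CompleteSpace H]
    [NormedAddCommGroup HT] [InnerProductSpace ℂ HT] [CompleteSpace HT]
    (P : HilbertTensor H H HT)
    (Q : H →L[ℂ] H) (hQ : IsSelfAdjoint Q) (κ : ℝ)
    (Ω : H) (hΩ : Q Ω = 0) :
    (∀ x y : H →L[ℂ] H,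
      (P.map x 1 * adExp ((Complex.I * (κ : ℂ)) • P.map Q Q) (P.map 1 y))
          (P.tmul Ω Ω)
        = P.tmul (x Ω) (y Ω)) ∧
    (∀ Mm Mp : VonNeumannAlgebra H,
      Dense ((fun z : HT →L[ℂ] HT => z (P.tmul Ω Ω)) ''
        genVN ((fun x : H →L[ℂ] H => P.map x 1) '' (Mm : Set (H →L[ℂ] H)) ∪
               (fun y : H →L[ℂ] H => P.map 1 y) '' (Mp : Set (H →L[ℂ] H)))) →
      Dense ((fun z : HT →L[ℂ] HT => z (P.tmul Ω Ω)) ''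
        genVN ((fun x : H →L[ℂ] H => P.map x 1) '' (Mm : Set (H →L[ℂ] H)) ∪
               (fun y : H →L[ℂ] H =>
                  adExp ((Complex.I * (κ : ℂ)) • P.map Q Q) (P.map 1 y)) ''
                 (Mp : Set (H →L[ℂ] H))))) :=
  stmt6_general P Q κ Ω hΩ
end
end

section
/- For every bounded operator x on H, every n ∈ ℤ, every ξ ∈ H and every η in the range of E n, one has U_κ (x ⊗ 1) U_κ* (ξ ⊗ η) = (V(nκ) x V(nκ)* ξ) ⊗ η. Likewise, for every bounded operator y on H, every m ∈ ℤ, every ξ in the range of E m and every η ∈ H, one has U_κ (1 ⊗ y) U_κ* (ξ ⊗ η) = ξ ⊗ (V(mκ) y V(mκ)* η). -/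
/-!
Fix `η` in the range of `E n` and let `A = (· ⊗ η) : H → H ⊗ H`. On each `E m ξ ⊗ η` the unitary
`U_κ` multiplies by `e^{iκmn}`, which is how `V(nκ)` acts on `E m ξ`; since `ξ = ∑ₘ E m ξ`, this gives
`U_κ A = A V(nκ)`, hence `U_κ* A = A V(nκ)*` by unitarity. As also `(x ⊗ 1) A = A x`, conjugating
by `U_κ` yields `U_κ (x ⊗ 1) U_κ* A = A V(nκ) x V(nκ)*`. The second factor is symmetric.
-/

noncomputable section

open ContinuousLinearMap

namespace ContinuousLinearMap

variable {𝕜 ι E F : Type*} [NormedField 𝕜] [NormedAddCommGroup E] [NormedSpace 𝕜 E]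
  [NormedAddCommGroup F] [NormedSpace 𝕜 F]

theorem ext_of_hasSum {p : ι → E → E} (hp : ∀ ξ, HasSum (fun i => p i ξ) ξ) {f g : E →L[𝕜] F}
    (h : ∀ i ξ, f (p i ξ) = g (p i ξ)) : f = g := by
  ext ξ
  exact ((hp ξ).mapL f).unique (by simpa only [h] using (hp ξ).mapL g)

end ContinuousLinearMap

section Intertwining

variable {K L : Type*} [NormedAddCommGroup K] [InnerProductSpace ℂ K] [CompleteSpace K]
  [NormedAddCommGroup L] [InnerProductSpace ℂ L] [CompleteSpace L]
  {U X : L →L[ℂ] L} {W x : K →L[ℂ] K} {A : K →L[ℂ] L}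

theorem star_comp_eq_comp_star_of_comp_eq (hU : U ∈ unitary (L →L[ℂ] L))
    (hW : W ∈ unitary (K →L[ℂ] K)) (h : U ∘L A = A ∘L W) : star U ∘L A = A ∘L star W := by
  calc star U ∘L A = star U ∘L (A ∘L (W * star W)) := by
        rw [Unitary.mul_star_self_of_mem hW, one_def, comp_id]
    _ = star U ∘L ((U ∘L A) ∘L star W) := by rw [h, mul_def, comp_assoc]
    _ = (star U * U) ∘L (A ∘L star W) := by simp only [mul_def, comp_assoc]
    _ = A ∘L star W := by rw [Unitary.star_mul_self_of_mem hU, one_def, id_comp]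

theorem conj_comp_eq_comp_conj_of_comp_eq (hU : U ∈ unitary (L →L[ℂ] L))
    (hW : W ∈ unitary (K →L[ℂ] K)) (hUA : U ∘L A = A ∘L W) (hXA : X ∘L A = A ∘L x) :
    (U * X * star U) ∘L A = A ∘L (W * x * star W) := by
  simp only [mul_def, comp_assoc, star_comp_eq_comp_star_of_comp_eq hU hW hUA]
  simp only [← comp_assoc, hXA, hUA]

end Intertwining

namespace HilbertTensor

variable {H HT : Type*} [NormedAddCommGroup H] [InnerProductSpace ℂ H] [CompleteSpace H]
  [NormedAddCommGroup HT] [InnerProductSpace ℂ HT] [CompleteSpace HT]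
  (P : HilbertTensor H H HT)

theorem map_one_right_comp_flip_tmul (x : H →L[ℂ] H) (η : H) :
    P.map x 1 ∘L P.tmul.flip η = P.tmul.flip η ∘L x := by
  ext ξ
  simp [P.map_tmul]

theorem map_one_left_comp_tmul (y : H →L[ℂ] H) (ξ : H) :
    P.map 1 y ∘L P.tmul ξ = P.tmul ξ ∘L y := by
  ext η
  simp [P.map_tmul]

variable {E : ℤ → H →L[ℂ] H} {V : ℝ → H →L[ℂ] H} {κ : ℝ} {U : HT →L[ℂ] HT}

theorem comp_flip_tmul_of_mem_range (hE_sum : ∀ ξ : H, HasSum (fun n => E n ξ) ξ)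
    (hV_eig : ∀ (t : ℝ) (n : ℤ) (ξ : H), ξ ∈ Set.range ⇑(E n) →
      V t ξ = Complex.exp (Complex.I * (n : ℂ) * (t : ℂ)) • ξ)
    (hU_eig : ∀ (m n : ℤ) (ξ η : H), ξ ∈ Set.range ⇑(E m) → η ∈ Set.range ⇑(E n) →
      U (P.tmul ξ η) = Complex.exp (Complex.I * (κ : ℂ) * (m : ℂ) * (n : ℂ)) • P.tmul ξ η)
    {n : ℤ} {η : H} (hη : η ∈ Set.range ⇑(E n)) :
    U ∘L P.tmul.flip η = P.tmul.flip η ∘L V (n * κ) := by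
  refine ext_of_hasSum hE_sum fun m ξ => ?_
  have hm : E m ξ ∈ Set.range ⇑(E m) := ⟨ξ, rfl⟩
  simp only [comp_apply, flip_apply, hU_eig m n _ _ hm hη, hV_eig _ m _ hm, map_smul]
  push_cast
  ring_nf

theorem comp_tmul_of_mem_range (hE_sum : ∀ ξ : H, HasSum (fun n => E n ξ) ξ)
    (hV_eig : ∀ (t : ℝ) (n : ℤ) (ξ : H), ξ ∈ Set.range ⇑(E n) →
      V t ξ = Complex.exp (Complex.I * (n : ℂ) * (t : ℂ)) • ξ)
    (hU_eig : ∀ (m n : ℤ) (ξ η : H), ξ ∈ Set.range ⇑(E m) → η ∈ Set.range ⇑(E n) →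
      U (P.tmul ξ η) = Complex.exp (Complex.I * (κ : ℂ) * (m : ℂ) * (n : ℂ)) • P.tmul ξ η)
    {m : ℤ} {ξ : H} (hξ : ξ ∈ Set.range ⇑(E m)) :
    U ∘L P.tmul ξ = P.tmul ξ ∘L V (m * κ) := by
  refine ext_of_hasSum hE_sum fun n η => ?_
  have hn : E n η ∈ Set.range ⇑(E n) := ⟨η, rfl⟩
  simp only [comp_apply, hU_eig m n _ _ hξ hn, hV_eig _ n _ hn, map_smul]
  push_cast
  ring_nf

end HilbertTensor

theorem stmt9_general
    {H HT : Type*}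
    [NormedAddCommGroup H] [InnerProductSpace ℂ H] [CompleteSpace H]
    [NormedAddCommGroup HT] [InnerProductSpace ℂ HT] [CompleteSpace HT]
    (P : HilbertTensor H H HT)
    (E : ℤ → (H →L[ℂ] H))
    (hE_sum : ∀ ξ : H, HasSum (fun n => E n ξ) ξ)
    (V : ℝ → (H →L[ℂ] H))
    (hV_unitary : ∀ t, V t ∈ unitary (H →L[ℂ] H))
    (hV_eig : ∀ (t : ℝ) (n : ℤ) (ξ : H), ξ ∈ Set.range ⇑(E n) →
      V t ξ = Complex.exp (Complex.I * (n : ℂ) * (t : ℂ)) • ξ)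
    (κ : ℝ) (U : HT →L[ℂ] HT)
    (hU_unitary : U ∈ unitary (HT →L[ℂ] HT))
    (hU_eig : ∀ (m n : ℤ) (ξ η : H), ξ ∈ Set.range ⇑(E m) → η ∈ Set.range ⇑(E n) →
      U (P.tmul ξ η) = Complex.exp (Complex.I * (κ : ℂ) * (m : ℂ) * (n : ℂ)) • P.tmul ξ η)
    :
    (∀ (x : H →L[ℂ] H) (n : ℤ) (ξ η : H), η ∈ Set.range ⇑(E n) →
      (U * P.map x 1 * star U) (P.tmul ξ η)
        = P.tmul ((V ((n : ℝ) * κ) * x * star (V ((n : ℝ) * κ))) ξ) η) ∧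
    (∀ (y : H →L[ℂ] H) (m : ℤ) (ξ η : H), ξ ∈ Set.range ⇑(E m) →
      (U * P.map 1 y * star U) (P.tmul ξ η)
        = P.tmul ξ ((V ((m : ℝ) * κ) * y * star (V ((m : ℝ) * κ))) η)) := by
  constructor
  · intro x n ξ η hη
    have h := conj_comp_eq_comp_conj_of_comp_eq hU_unitary (hV_unitary _)
      (P.comp_flip_tmul_of_mem_range hE_sum hV_eig hU_eig hη) (P.map_one_right_comp_flip_tmul x η)
    exact congr($h ξ)
  · intro y m ξ η hξ
    have h := conj_comp_eq_comp_conj_of_comp_eq hU_unitary (hV_unitary _)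
      (P.comp_tmul_of_mem_range hE_sum hV_eig hU_eig hξ) (P.map_one_left_comp_tmul y ξ)
    exact congr($h η)

/-- on the range of `E n` in the second factor,
`Ad U_κ (x ⊗ 1)` acts as `Ad V(nκ)(x) ⊗ 1`, and symmetrically. -/
theorem stmt9
    {H HT : Type*}
    [NormedAddCommGroup H] [InnerProductSpace ℂ H] [CompleteSpace H]
    [NormedAddCommGroup HT] [InnerProductSpace ℂ HT] [CompleteSpace HT]
    (P : HilbertTensor H H HT)
    (E : ℤ → (H →L[ℂ] H))
    (hE_idem : ∀ n, IsIdempotentElem (E n))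
    (hE_sa : ∀ n, IsSelfAdjoint (E n))
    (hE_orth : ∀ m n, m ≠ n → E m * E n = 0)
    (hE_sum : ∀ ξ : H, HasSum (fun n => E n ξ) ξ)
    (V : ℝ → (H →L[ℂ] H))
    (hV_unitary : ∀ t, V t ∈ unitary (H →L[ℂ] H))
    (hV_eig : ∀ (t : ℝ) (n : ℤ) (ξ : H), ξ ∈ Set.range ⇑(E n) →
      V t ξ = Complex.exp (Complex.I * (n : ℂ) * (t : ℂ)) • ξ)
    (κ : ℝ) (U : HT →L[ℂ] HT)
    (hU_unitary : U ∈ unitary (HT →L[ℂ] HT))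
    (hU_eig : ∀ (m n : ℤ) (ξ η : H), ξ ∈ Set.range ⇑(E m) → η ∈ Set.range ⇑(E n) →
      U (P.tmul ξ η) = Complex.exp (Complex.I * (κ : ℂ) * (m : ℂ) * (n : ℂ)) • P.tmul ξ η)
    :
    (∀ (x : H →L[ℂ] H) (n : ℤ) (ξ η : H), η ∈ Set.range ⇑(E n) →
      (U * P.map x 1 * star U) (P.tmul ξ η)
        = P.tmul ((V ((n : ℝ) * κ) * x * star (V ((n : ℝ) * κ))) ξ) η) ∧
    (∀ (y : H →L[ℂ] H) (m : ℤ) (ξ η : H), ξ ∈ Set.range ⇑(E m) →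
      (U * P.map 1 y * star U) (P.tmul ξ η)
        = P.tmul ξ ((V ((m : ℝ) * κ) * y * star (V ((m : ℝ) * κ))) η)) :=
  stmt9_general P E hE_sum V hV_unitary hV_eig κ U hU_unitary hU_eig
end
end

section
/- Fix m, n ∈ ℤ and κ ∈ ℝ. If x is a bounded operator on H with V(t) x V(t)* = e^{i m t} x for all t ∈ ℝ, then U_κ (x ⊗ 1) U_κ* = x ⊗ V(mκ). If y is a bounded operator on H with V(t) y V(t)* = e^{i n t} y for all t ∈ ℝ, then U_κ (1 ⊗ y) U_κ* = V(nκ) ⊗ y. -/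
/-! The projections `E n` grade `H`: `V t` acts on `E n H` by `e^{int}` and `U` acts on
`E k H ⊗ E l H` by `e^{iκkl}`. Comparing the eigenvalues of `V t` on the components of `x ξ`, the
covariance relation forces `x (E k H) ⊆ E (k + m) H`, so on `E k H ⊗ E l H` both `U (x ⊗ 1)` and
`(x ⊗ V(mκ)) U` act as `e^{iκ(k+m)l} (x ⊗ 1)`. These subspaces span a dense subspace, hence
`U (x ⊗ 1) = (x ⊗ V(mκ)) U`; the identity for `1 ⊗ y` is symmetric. -/

noncomputable section

open Complex

structure IsResolutionOfIdentity {ι R M : Type*} [Semiring R] [AddCommMonoid M] [Module R M]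
    [TopologicalSpace M] (E : ι → M →L[R] M) : Prop where
  mul_eq_zero_of_ne : ∀ i j, i ≠ j → E i * E j = 0
  hasSum_apply : ∀ v, HasSum (fun i => E i v) v

theorem Unitary.mul_mul_star_eq_of_mul_eq {R : Type*} [Monoid R] [StarMul R] {U a b : R}
    (hU : U ∈ unitary R) (h : U * a = b * U) : U * a * star U = b := by
  rw [h, mul_assoc, Unitary.mul_star_self_of_mem hU, mul_one]

theorem exp_mul_ne_exp_mul_of_ne {j s : ℤ} (h : j ≠ s) :
    exp (I * j * ((Real.pi / (j - s) : ℝ) : ℂ)) ≠ exp (I * s * ((Real.pi / (j - s) : ℝ) : ℂ)) := by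
  have hjs : (j - s : ℂ) ≠ 0 := sub_ne_zero.mpr (by exact_mod_cast h)
  rw [Ne, exp_eq_exp_iff_exists_int]
  rintro ⟨n, hn⟩
  have h2n : ((1 : ℤ) : ℂ) = ((2 * n : ℤ) : ℂ) := by
    push_cast at hn ⊢
    field_simp at hn
    apply mul_left_cancel₀ hjs
    linear_combination hn
  have : (1 : ℤ) = 2 * n := by exact_mod_cast h2n
  omega

theorem ContinuousLinearMap.ext_of_hasSum_apply {ι R M N : Type*} [Semiring R]
    [AddCommMonoid M] [Module R M] [TopologicalSpace M] [AddCommMonoid N] [Module R N]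
    [TopologicalSpace N] [T2Space N] {E : ι → M →L[R] M} (hE : ∀ v, HasSum (fun i => E i v) v)
    {f g : M →L[R] N} (h : ∀ i v, f (E i v) = g (E i v)) : f = g := by
  ext v
  refine ((hE v).mapL f).unique ?_
  simpa only [h] using (hE v).mapL g

namespace IsResolutionOfIdentity

section General

variable {ι R M : Type*} [Semiring R] [AddCommMonoid M] [Module R M] [TopologicalSpace M]
  [T2Space M] {E : ι → M →L[R] M}

theorem apply_apply_self (hE : IsResolutionOfIdentity E) (j : ι) (v : M) :
    E j (E j v) = E j v := by
  refine (hasSum_single j fun i hi => ?_).unique ((hE.hasSum_apply v).mapL (E j))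
  rw [← mul_apply_eq_comp, hE.mul_eq_zero_of_ne j i (Ne.symm hi), zero_apply]

theorem apply_eq_smul_of_hasSum (hE : IsResolutionOfIdentity E) {c : ι → R} {v w : M}
    (h : HasSum (fun i => c i • E i v) w) (j : ι) : E j w = c j • E j v := by
  rw [← hE.apply_apply_self j v, ← map_smul]
  refine (h.mapL (E j)).unique (hasSum_single j fun i hi => ?_)
  rw [map_smul, ← mul_apply_eq_comp, hE.mul_eq_zero_of_ne j i (Ne.symm hi),
    zero_apply, smul_zero]

end General

section Integer

variable {M : Type*} [AddCommGroup M] [Module ℂ M] [TopologicalSpace M] [T2Space M]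
  {E : ℤ → M →L[ℂ] M} {V : ℝ → M →L[ℂ] M}

theorem apply_apply_eq_exp_smul (hE : IsResolutionOfIdentity E)
    (hV : ∀ (t : ℝ) (n : ℤ) (ξ : M), ξ ∈ Set.range ⇑(E n) → V t ξ = exp (I * n * t) • ξ)
    (t : ℝ) (n : ℤ) (v : M) : E n (V t v) = exp (I * n * t) • E n v := by
  refine hE.apply_eq_smul_of_hasSum (c := fun n : ℤ => exp (I * n * t)) ?_ n
  have hVE : ∀ n, V t (E n v) = exp (I * n * t) • E n v := fun n => hV t n _ ⟨v, rfl⟩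
  simpa only [hVE] using (hE.hasSum_apply v).mapL (V t)

theorem mem_range_of_forall_apply_eq_exp_smul (hE : IsResolutionOfIdentity E)
    (hV : ∀ (t : ℝ) (n : ℤ) (ξ : M), ξ ∈ Set.range ⇑(E n) → V t ξ = exp (I * n * t) • ξ)
    {s : ℤ} {v : M} (hv : ∀ t : ℝ, V t v = exp (I * s * t) • v) : v ∈ Set.range ⇑(E s) := by
  refine ⟨v, (hasSum_single s fun j hj => ?_).unique (hE.hasSum_apply v)⟩
  have h := hE.apply_apply_eq_exp_smul hV (Real.pi / (j - s)) j v
  rw [hv, map_smul, ← sub_eq_zero, ← sub_smul, smul_eq_zero, sub_eq_zero] at h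
  exact h.resolve_left (exp_mul_ne_exp_mul_of_ne hj).symm

theorem apply_mem_range_add {H : Type*} [NormedAddCommGroup H] [InnerProductSpace ℂ H]
    [CompleteSpace H] {E : ℤ → H →L[ℂ] H} {V : ℝ → H →L[ℂ] H} (hE : IsResolutionOfIdentity E)
    (hV_unitary : ∀ t, V t ∈ unitary (H →L[ℂ] H))
    (hV : ∀ (t : ℝ) (n : ℤ) (ξ : H), ξ ∈ Set.range ⇑(E n) → V t ξ = exp (I * n * t) • ξ)
    {m : ℤ} {x : H →L[ℂ] H} (hx : ∀ t : ℝ, V t * x * star (V t) = exp (I * m * t) • x)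
    {k : ℤ} {ξ : H} (hξ : ξ ∈ Set.range ⇑(E k)) : x ξ ∈ Set.range ⇑(E (k + m)) := by
  refine hE.mem_range_of_forall_apply_eq_exp_smul hV fun t => ?_
  have hVx : V t * x = exp (I * m * t) • (x * V t) := by
    rw [← smul_mul_assoc, ← hx t, mul_assoc _ (star (V t)), Unitary.star_mul_self_of_mem
      (hV_unitary t), mul_one]
  calc V t (x ξ) = exp (I * m * t) • x (V t ξ) := by rw [← mul_apply_eq_comp, hVx]; rfl
    _ = exp (I * ↑(k + m) * t) • x ξ := by
      rw [hV t k ξ hξ, map_smul, smul_smul, ← exp_add]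
      push_cast
      ring_nf

end Integer

end IsResolutionOfIdentity

namespace HilbertTensor

variable {H₁ H₂ HT : Type*}
  [NormedAddCommGroup H₁] [InnerProductSpace ℂ H₁] [CompleteSpace H₁]
  [NormedAddCommGroup H₂] [InnerProductSpace ℂ H₂] [CompleteSpace H₂]
  [NormedAddCommGroup HT] [InnerProductSpace ℂ HT] [CompleteSpace HT]

theorem ext_of_hasSum_apply (P : HilbertTensor H₁ H₂ HT) {ι₁ ι₂ : Type*}
    {E₁ : ι₁ → H₁ →L[ℂ] H₁} {E₂ : ι₂ → H₂ →L[ℂ] H₂}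
    (hE₁ : ∀ v, HasSum (fun i => E₁ i v) v) (hE₂ : ∀ v, HasSum (fun i => E₂ i v) v)
    {A B : HT →L[ℂ] HT} (h : ∀ k l ξ η, A (P.tmul (E₁ k ξ) (E₂ l η)) = B (P.tmul (E₁ k ξ) (E₂ l η))) :
    A = B := by
  have hleft : ∀ k ξ, A.comp (P.tmul (E₁ k ξ)) = B.comp (P.tmul (E₁ k ξ)) := fun k ξ =>
    ContinuousLinearMap.ext_of_hasSum_apply hE₂ fun l η => h k l ξ η
  have hright : ∀ η, A.comp (P.tmul.flip η) = B.comp (P.tmul.flip η) := fun η =>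
    ContinuousLinearMap.ext_of_hasSum_apply hE₁ fun k ξ => congr($(hleft k ξ) η)
  refine ContinuousLinearMap.ext_on P.dense_span ?_
  rintro _ ⟨ξ, η, rfl⟩
  exact congr($(hright η) ξ)

end HilbertTensor

section Conjugation

variable {H HT : Type*} [NormedAddCommGroup H] [InnerProductSpace ℂ H] [CompleteSpace H]
  [NormedAddCommGroup HT] [InnerProductSpace ℂ HT] [CompleteSpace HT]
  {E : ℤ → H →L[ℂ] H} {V : ℝ → H →L[ℂ] H} {U : HT →L[ℂ] HT} {κ : ℝ}

theorem HilbertTensor.conj_map_one_eq (P : HilbertTensor H H HT) (hE : IsResolutionOfIdentity E)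
    (hV_unitary : ∀ t, V t ∈ unitary (H →L[ℂ] H))
    (hV : ∀ (t : ℝ) (n : ℤ) (ξ : H), ξ ∈ Set.range ⇑(E n) → V t ξ = exp (I * n * t) • ξ)
    (hU_unitary : U ∈ unitary (HT →L[ℂ] HT))
    (hU : ∀ (m n : ℤ) (ξ η : H), ξ ∈ Set.range ⇑(E m) → η ∈ Set.range ⇑(E n) →
      U (P.tmul ξ η) = exp (I * κ * m * n) • P.tmul ξ η)
    {m : ℤ} {x : H →L[ℂ] H} (hx : ∀ t : ℝ, V t * x * star (V t) = exp (I * m * t) • x) :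
    U * P.map x 1 * star U = P.map x (V (m * κ)) := by
  refine Unitary.mul_mul_star_eq_of_mul_eq hU_unitary
    (P.ext_of_hasSum_apply hE.hasSum_apply hE.hasSum_apply fun k l ξ η => ?_)
  have hxξ := hE.apply_mem_range_add hV_unitary hV hx (k := k) ⟨ξ, rfl⟩
  simp only [mul_apply_eq_comp, P.map_tmul, one_apply_eq_self]
  rw [hU _ _ _ _ hxξ ⟨η, rfl⟩, hU k l _ _ ⟨ξ, rfl⟩ ⟨η, rfl⟩, map_smul, P.map_tmul,
    hV _ l _ ⟨η, rfl⟩, map_smul, smul_smul, ← exp_add]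
  congr 2
  push_cast
  ring

theorem HilbertTensor.conj_one_map_eq (P : HilbertTensor H H HT) (hE : IsResolutionOfIdentity E)
    (hV_unitary : ∀ t, V t ∈ unitary (H →L[ℂ] H))
    (hV : ∀ (t : ℝ) (n : ℤ) (ξ : H), ξ ∈ Set.range ⇑(E n) → V t ξ = exp (I * n * t) • ξ)
    (hU_unitary : U ∈ unitary (HT →L[ℂ] HT))
    (hU : ∀ (m n : ℤ) (ξ η : H), ξ ∈ Set.range ⇑(E m) → η ∈ Set.range ⇑(E n) →
      U (P.tmul ξ η) = exp (I * κ * m * n) • P.tmul ξ η)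
    {n : ℤ} {y : H →L[ℂ] H} (hy : ∀ t : ℝ, V t * y * star (V t) = exp (I * n * t) • y) :
    U * P.map 1 y * star U = P.map (V (n * κ)) y := by
  refine Unitary.mul_mul_star_eq_of_mul_eq hU_unitary
    (P.ext_of_hasSum_apply hE.hasSum_apply hE.hasSum_apply fun k l ξ η => ?_)
  have hyη := hE.apply_mem_range_add hV_unitary hV hy (k := l) ⟨η, rfl⟩
  simp only [mul_apply_eq_comp, P.map_tmul, one_apply_eq_self]
  rw [hU _ _ _ _ ⟨ξ, rfl⟩ hyη, hU k l _ _ ⟨ξ, rfl⟩ ⟨η, rfl⟩, map_smul, P.map_tmul,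
    hV _ k _ ⟨ξ, rfl⟩, map_smul, smul_apply, smul_smul, ← exp_add]
  congr 2
  push_cast
  ring

end Conjugation

theorem stmt10_general
    {H HT : Type*}
    [NormedAddCommGroup H] [InnerProductSpace ℂ H] [CompleteSpace H]
    [NormedAddCommGroup HT] [InnerProductSpace ℂ HT] [CompleteSpace HT]
    (P : HilbertTensor H H HT)
    (E : ℤ → (H →L[ℂ] H))
    (hE_orth : ∀ m n, m ≠ n → E m * E n = 0)
    (hE_sum : ∀ ξ : H, HasSum (fun n => E n ξ) ξ)
    (V : ℝ → (H →L[ℂ] H))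
    (hV_unitary : ∀ t, V t ∈ unitary (H →L[ℂ] H))
    (hV_eig : ∀ (t : ℝ) (n : ℤ) (ξ : H), ξ ∈ Set.range ⇑(E n) →
      V t ξ = Complex.exp (Complex.I * (n : ℂ) * (t : ℂ)) • ξ)
    (κ : ℝ) (U : HT →L[ℂ] HT)
    (hU_unitary : U ∈ unitary (HT →L[ℂ] HT))
    (hU_eig : ∀ (m n : ℤ) (ξ η : H), ξ ∈ Set.range ⇑(E m) → η ∈ Set.range ⇑(E n) →
      U (P.tmul ξ η) = Complex.exp (Complex.I * (κ : ℂ) * (m : ℂ) * (n : ℂ)) • P.tmul ξ η)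
    (m n : ℤ) :
    (∀ x : H →L[ℂ] H,
      (∀ t : ℝ, V t * x * star (V t) = Complex.exp (Complex.I * (m : ℂ) * (t : ℂ)) • x) →
      U * P.map x 1 * star U = P.map x (V ((m : ℝ) * κ))) ∧
    (∀ y : H →L[ℂ] H,
      (∀ t : ℝ, V t * y * star (V t) = Complex.exp (Complex.I * (n : ℂ) * (t : ℂ)) • y) →
      U * P.map 1 y * star U = P.map (V ((n : ℝ) * κ)) y) := by
  have hE : IsResolutionOfIdentity E := ⟨hE_orth, hE_sum⟩
  exact ⟨fun x hx => P.conj_map_one_eq hE hV_unitary hV_eig hU_unitary hU_eig hx,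
    fun y hy => P.conj_one_map_eq hE hV_unitary hV_eig hU_unitary hU_eig hy⟩

/-- if `Ad V(t)(x) = e^{imt} x` for all `t`, then
`U_κ (x ⊗ 1) U_κ* = x ⊗ V(mκ)`; if `Ad V(t)(y) = e^{int} y`, then
`U_κ (1 ⊗ y) U_κ* = V(nκ) ⊗ y`. -/
theorem stmt10
    {H HT : Type*}
    [NormedAddCommGroup H] [InnerProductSpace ℂ H] [CompleteSpace H]
    [NormedAddCommGroup HT] [InnerProductSpace ℂ HT] [CompleteSpace HT]
    (P : HilbertTensor H H HT)
    (E : ℤ → (H →L[ℂ] H))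
    (hE_idem : ∀ n, IsIdempotentElem (E n))
    (hE_sa : ∀ n, IsSelfAdjoint (E n))
    (hE_orth : ∀ m n, m ≠ n → E m * E n = 0)
    (hE_sum : ∀ ξ : H, HasSum (fun n => E n ξ) ξ)
    (V : ℝ → (H →L[ℂ] H))
    (hV_unitary : ∀ t, V t ∈ unitary (H →L[ℂ] H))
    (hV_eig : ∀ (t : ℝ) (n : ℤ) (ξ : H), ξ ∈ Set.range ⇑(E n) →
      V t ξ = Complex.exp (Complex.I * (n : ℂ) * (t : ℂ)) • ξ)
    (κ : ℝ) (U : HT →L[ℂ] HT)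
    (hU_unitary : U ∈ unitary (HT →L[ℂ] HT))
    (hU_eig : ∀ (m n : ℤ) (ξ η : H), ξ ∈ Set.range ⇑(E m) → η ∈ Set.range ⇑(E n) →
      U (P.tmul ξ η) = Complex.exp (Complex.I * (κ : ℂ) * (m : ℂ) * (n : ℂ)) • P.tmul ξ η)
    (m n : ℤ) :
    (∀ x : H →L[ℂ] H,
      (∀ t : ℝ, V t * x * star (V t) = Complex.exp (Complex.I * (m : ℂ) * (t : ℂ)) • x) →
      U * P.map x 1 * star U = P.map x (V ((m : ℝ) * κ))) ∧
    (∀ y : H →L[ℂ] H,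
      (∀ t : ℝ, V t * y * star (V t) = Complex.exp (Complex.I * (n : ℂ) * (t : ℂ)) • y) →
      U * P.map 1 y * star U = P.map (V ((n : ℝ) * κ)) y) :=
  stmt10_general P E hE_orth hE_sum V hV_unitary hV_eig κ U hU_unitary hU_eig m n
end
end

section
/- For every x ∈ M and every n ∈ ℤ, the Fourier component x_n is a bounded operator belonging to M, it satisfies V(t) x_n V(t)* = e^{i n t} x_n for all t ∈ ℝ, and for all l, k ∈ ℤ one has E(l) x_n E(k) = E(l) x E(k) if l − k = n and E(l) x_n E(k) = 0 if l − k ≠ n. -/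
/-! Each `V(s) x V(s)*` lies in `M`, so its Fourier average `x_n` commutes with `M'` and lies
in `M'' = M`. Translating the variable of integration by `t` over a full period gives
`V(t) x_n V(t)* = e^{int} x_n`. Finally `E(k)` maps into the `e^{ikt}`-eigenspace of `V(t)`, on
which `V(s)*` acts as `e^{-iks}`; hence `x_n E(k) = E(n+k) x E(k)`, and the orthogonality
`E(l) E(m) = δ_{lm} E(m)` of characters does the rest. -/

noncomputable section

open MeasureTheory Complex
open scoped Real

def fourierCoeffTwoPi {E : Type*} [NormedAddCommGroup E] [NormedSpace ℂ E] (n : ℤ)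
    (f : ℝ → E) : E :=
  (2 * (π : ℂ))⁻¹ • ∫ s in (0 : ℝ)..2 * π, exp (-(I * n * s)) • f s

section FourierCoeff

variable {E F : Type*} [NormedAddCommGroup E] [NormedSpace ℂ E]
  [NormedAddCommGroup F] [NormedSpace ℂ F] {f g : ℝ → E} {n : ℤ}

lemma intervalIntegrable_exp_smul (hf : IntervalIntegrable f volume 0 (2 * π)) (n : ℤ) :
    IntervalIntegrable (fun s : ℝ => exp (-(I * n * s)) • f s) volume 0 (2 * π) :=
  hf.continuousOn_smul (by fun_prop)

lemma fourierCoeffTwoPi_add (hf : IntervalIntegrable f volume 0 (2 * π))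
    (hg : IntervalIntegrable g volume 0 (2 * π)) :
    fourierCoeffTwoPi n (fun s => f s + g s) = fourierCoeffTwoPi n f + fourierCoeffTwoPi n g := by
  simp only [fourierCoeffTwoPi, smul_add]
  rw [intervalIntegral.integral_add (intervalIntegrable_exp_smul hf n)
    (intervalIntegrable_exp_smul hg n), smul_add]

lemma fourierCoeffTwoPi_smul (c : ℂ) :
    fourierCoeffTwoPi n (fun s => c • f s) = c • fourierCoeffTwoPi n f := by
  simp only [fourierCoeffTwoPi, smul_comm _ c, intervalIntegral.integral_smul]

lemma norm_fourierCoeffTwoPi_le {C : ℝ} (hf : ∀ s, ‖f s‖ ≤ C) :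
    ‖fourierCoeffTwoPi n f‖ ≤ C := by
  have h2π : (0 : ℝ) < 2 * π := by positivity
  have hint : ‖∫ s in (0 : ℝ)..2 * π, exp (-(I * n * s)) • f s‖ ≤ C * |2 * π - 0| :=
    intervalIntegral.norm_integral_le_of_norm_le_const fun s _ => by
      rw [norm_smul, norm_exp, ← ofReal_intCast]
      simpa [← ofReal_mul, mul_comm I] using hf s
  rw [sub_zero, abs_of_pos h2π] at hint
  rw [fourierCoeffTwoPi, norm_smul, norm_inv, ← ofReal_ofNat, ← ofReal_mul, norm_real,
    Real.norm_of_nonneg h2π.le]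
  calc (2 * π)⁻¹ * _ ≤ (2 * π)⁻¹ * (C * (2 * π)) := by gcongr
    _ = C := by field_simp

lemma ContinuousLinearMap.map_fourierCoeffTwoPi [CompleteSpace E] [CompleteSpace F]
    (T : E →L[ℂ] F) (hf : IntervalIntegrable f volume 0 (2 * π)) :
    T (fourierCoeffTwoPi n f) = fourierCoeffTwoPi n (fun s => T (f s)) := by
  simp only [fourierCoeffTwoPi, map_smul,
    ← T.intervalIntegral_comp_comm (intervalIntegrable_exp_smul hf n)]

lemma fourierCoeffTwoPi_comp_add_right (hf : Function.Periodic f (2 * π)) (t : ℝ) :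
    fourierCoeffTwoPi n (fun s => f (s + t)) = exp (I * n * t) • fourierCoeffTwoPi n f := by
  have hg : Function.Periodic (fun s : ℝ => exp (-(I * n * s)) • f s) (2 * π) := fun s => by
    have : exp (-(I * n * ↑(s + 2 * π))) = exp (-(I * n * s)) := by
      rw [← mul_one (exp (-(I * n * s))), ← exp_int_mul_two_pi_mul_I (-n), ← exp_add]
      push_cast
      ring_nf
    simp only [this, hf s]
  have hshift : ∀ s : ℝ, exp (-(I * n * s)) • f (s + t)
      = exp (I * n * t) • (exp (-(I * n * ↑(s + t))) • f (s + t)) := fun s => by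
    rw [smul_smul, ← exp_add]
    push_cast
    ring_nf
  rw [fourierCoeffTwoPi, fourierCoeffTwoPi, funext hshift, intervalIntegral.integral_smul,
    intervalIntegral.integral_comp_add_right (fun s => exp (-(I * n * s)) • f s), zero_add,
    add_comm (2 * π) t, hg.intervalIntegral_add_eq t 0, zero_add, smul_comm]

lemma fourierCoeffTwoPi_exp_smul (m : ℤ) :
    fourierCoeffTwoPi n (fun s => exp (I * m * s) • f s) = fourierCoeffTwoPi (n - m) f := by
  simp only [fourierCoeffTwoPi, smul_smul, ← exp_add]
  congr 2
  ext s
  push_cast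
  ring_nf

lemma fourierCoeffTwoPi_const [CompleteSpace E] (v : E) :
    fourierCoeffTwoPi n (fun _ => v) = if n = 0 then v else 0 := by
  rw [fourierCoeffTwoPi, intervalIntegral.integral_smul_const]
  split_ifs with hn
  · have h2π : (2 * π : ℂ) ≠ 0 := by simp [Real.pi_ne_zero]
    simp only [hn, Int.cast_zero, mul_zero, zero_mul, neg_zero, exp_zero,
      intervalIntegral.integral_const, sub_zero, real_smul, mul_one]
    push_cast
    rw [smul_smul, inv_mul_cancel₀ h2π, one_smul]
  · have hIn : -(I * n) ≠ 0 := by simp [hn]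
    have hint := integral_exp_mul_complex (a := 0) (b := 2 * π) hIn
    simp only [neg_mul] at hint ⊢
    have hper : exp (-(I * n * ↑(2 * π))) = 1 := by
      rw [← exp_int_mul_two_pi_mul_I (-n)]
      push_cast
      ring_nf
    rw [hint, hper]
    simp

lemma ContinuousLinearMap.map_fourierCoeffTwoPi_of_periodic [CompleteSpace E] [CompleteSpace F]
    (P : E →L[ℂ] F) {g : ℝ → F} (hf : IntervalIntegrable f volume 0 (2 * π))
    (hg : Function.Periodic g (2 * π)) {t : ℝ} (hP : ∀ s, P (f s) = g (s + t)) :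
    P (fourierCoeffTwoPi n f) = exp (I * n * t) • fourierCoeffTwoPi n g := by
  simp only [P.map_fourierCoeffTwoPi hf, hP, fourierCoeffTwoPi_comp_add_right hg]

lemma fourierCoeffTwoPi_exp_smul_const [CompleteSpace E] (m : ℤ) (v : E) :
    fourierCoeffTwoPi n (fun s => exp (I * m * s) • v) = if n = m then v else 0 := by
  simp only [fourierCoeffTwoPi_exp_smul m (f := fun _ => v), fourierCoeffTwoPi_const, sub_eq_zero]

lemma exists_eq_fourierCoeffTwoPi_apply [CompleteSpace F] (A : ℝ → E →L[ℂ] F)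
    (hA : ∀ ξ, IntervalIntegrable (fun s => A s ξ) volume 0 (2 * π)) {C : ℝ}
    (hC : ∀ s, ‖A s‖ ≤ C) (n : ℤ) :
    ∃ T : E →L[ℂ] F, ∀ ξ, T ξ = fourierCoeffTwoPi n (fun s => A s ξ) := by
  let L : E →ₗ[ℂ] F :=
    { toFun := fun ξ => fourierCoeffTwoPi n (fun s => A s ξ)
      map_add' := fun ξ η => by
        simp only [map_add]
        exact fourierCoeffTwoPi_add (hA ξ) (hA η)
      map_smul' := fun c ξ => by
        simp only [map_smul]
        exact fourierCoeffTwoPi_smul c }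
  exact ⟨L.mkContinuous C fun ξ =>
    norm_fourierCoeffTwoPi_le fun s => (A s).le_of_opNorm_le (hC s) ξ, fun _ => rfl⟩

lemma commute_of_eq_fourierCoeffTwoPi_apply [CompleteSpace E] {A : ℝ → E →L[ℂ] E}
    {T y : E →L[ℂ] E} (hA : ∀ ξ, IntervalIntegrable (fun s => A s ξ) volume 0 (2 * π))
    (hT : ∀ ξ, T ξ = fourierCoeffTwoPi n (fun s => A s ξ)) (hy : ∀ s, Commute y (A s)) :
    Commute y T := by
  show y * T = T * y
  ext ξ
  simp only [mul_apply_eq_comp, hT, y.map_fourierCoeffTwoPi (hA ξ)]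
  congr 1
  ext s
  exact congr($((hy s).eq) ξ)

end FourierCoeff

lemma continuous_apply_of_nnnorm_le {X E F : Type*} [TopologicalSpace X]
    [NormedAddCommGroup E] [NormedSpace ℂ E] [NormedAddCommGroup F] [NormedSpace ℂ F]
    {A : X → E →L[ℂ] F} (hA : ∀ ξ, Continuous fun s => A s ξ) {C : NNReal}
    (hC : ∀ s, ‖A s‖₊ ≤ C) {η : X → E} (hη : Continuous η) :
    Continuous fun s => A s (η s) :=
  (continuous_prod_of_continuous_lipschitzWith (fun p : E × X => A p.2 p.1) C hA
    fun s => (A s).lipschitz.weaken (hC s)).comp (hη.prodMk continuous_id)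

section Hilbert

variable {H : Type*} [NormedAddCommGroup H] [InnerProductSpace ℂ H] [CompleteSpace H]

lemma nnnorm_le_one_of_mem_unitary {u : H →L[ℂ] H} (hu : u ∈ unitary (H →L[ℂ] H)) :
    ‖u‖₊ ≤ 1 :=
  u.opNNNorm_le_bound 1 fun ξ => by
    rw [one_mul, ← NNReal.coe_le_coe, coe_nnnorm, coe_nnnorm,
      ContinuousLinearMap.norm_map_of_mem_unitary hu]

lemma norm_conj_of_mem_unitary {u : H →L[ℂ] H} (hu : u ∈ unitary (H →L[ℂ] H))
    (x : H →L[ℂ] H) : ‖u * x * star u‖ = ‖x‖ := by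
  rw [CStarRing.norm_mul_mem_unitary _ (Unitary.star_mem hu), CStarRing.norm_mem_unitary_mul _ hu]

lemma VonNeumannAlgebra.mem_of_eq_fourierCoeffTwoPi_apply (M : VonNeumannAlgebra H)
    {A : ℝ → H →L[ℂ] H} {T : H →L[ℂ] H} {n : ℤ}
    (hA : ∀ ξ, IntervalIntegrable (fun s => A s ξ) volume 0 (2 * π))
    (hT : ∀ ξ, T ξ = fourierCoeffTwoPi n (fun s => A s ξ)) (hAM : ∀ s, A s ∈ M) :
    T ∈ M := by
  rw [← SetLike.mem_coe, ← M.centralizer_centralizer, Set.mem_centralizer_iff]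
  intro y hy
  exact commute_of_eq_fourierCoeffTwoPi_apply hA hT fun s =>
    (Set.mem_centralizer_iff.mp hy _ (hAM s)).symm

structure IsPeriodicUnitaryGroup (V : ℝ → H →L[ℂ] H) : Prop where
  mem_unitary : ∀ t, V t ∈ unitary (H →L[ℂ] H)
  mul_eq_add : ∀ s t, V s * V t = V (s + t)
  map_zero : V 0 = 1
  map_two_pi : V (2 * π) = 1
  continuous_apply : ∀ ξ, Continuous fun t => V t ξ

namespace IsPeriodicUnitaryGroup

variable {V : ℝ → H →L[ℂ] H} (hV : IsPeriodicUnitaryGroup V)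
include hV

lemma star_eq (t : ℝ) : star (V t) = V (-t) :=
  left_inv_eq_right_inv (Unitary.star_mul_self_of_mem (hV.mem_unitary t))
    (by rw [hV.mul_eq_add, add_neg_cancel, hV.map_zero])

lemma periodic : Function.Periodic V (2 * π) := fun s => by
  rw [← hV.mul_eq_add, hV.map_two_pi, mul_one]

lemma continuous_conj_apply (x : H →L[ℂ] H) (ξ : H) :
    Continuous fun s => (V s * x * star (V s)) ξ := by
  simp only [hV.star_eq, mul_apply_eq_comp]
  exact continuous_apply_of_nnnorm_le hV.continuous_apply
    (fun s => nnnorm_le_one_of_mem_unitary (hV.mem_unitary s))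
    (x.continuous.comp ((hV.continuous_apply ξ).comp continuous_neg))

lemma apply_fourierCoeffTwoPi_orbit (m : ℤ) (η : H) (r : ℝ) :
    V r (fourierCoeffTwoPi m fun s => V s η)
      = exp (I * m * r) • fourierCoeffTwoPi m fun s => V s η :=
  (V r).map_fourierCoeffTwoPi_of_periodic ((hV.continuous_apply η).intervalIntegrable _ _)
    (fun s => by simp only [hV.periodic s]) fun s => by
      rw [← mul_apply_eq_comp, hV.mul_eq_add, add_comm]

lemma fourierCoeffTwoPi_orbit_orbit (a m : ℤ) (η : H) :
    (fourierCoeffTwoPi a fun s => V s (fourierCoeffTwoPi m fun s => V s η))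
      = if a = m then fourierCoeffTwoPi m (fun s => V s η) else 0 := by
  simp only [hV.apply_fourierCoeffTwoPi_orbit, fourierCoeffTwoPi_exp_smul_const]

lemma fourierCoeffTwoPi_conj_apply_orbit (x : H →L[ℂ] H) (n k : ℤ) (ξ : H) :
    (fourierCoeffTwoPi n fun s => (V s * x * star (V s)) (fourierCoeffTwoPi k fun s => V s ξ))
      = fourierCoeffTwoPi (n + k) fun s => V s (x (fourierCoeffTwoPi k fun s => V s ξ)) := by
  have h (s : ℝ) : (V s * x * star (V s)) (fourierCoeffTwoPi k fun s => V s ξ)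
      = exp (I * ↑(-k) * s) • V s (x (fourierCoeffTwoPi k fun s => V s ξ)) := by
    simp only [mul_apply_eq_comp, hV.star_eq, hV.apply_fourierCoeffTwoPi_orbit, map_smul]
    push_cast
    ring_nf
  rw [funext h, fourierCoeffTwoPi_exp_smul, sub_neg_eq_add]

lemma conj_eq_smul_of_eq_fourierCoeffTwoPi_apply (x : H →L[ℂ] H) {n : ℤ} {T : H →L[ℂ] H}
    (hT : ∀ ξ, T ξ = fourierCoeffTwoPi n fun s => (V s * x * star (V s)) ξ) (t : ℝ) :
    V t * T * star (V t) = exp (I * n * t) • T := by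
  have hshift (s : ℝ) : V t * (V s * x * star (V s)) * star (V t)
      = V (s + t) * x * star (V (s + t)) := by
    simp only [star_mul, ← mul_assoc, ← hV.mul_eq_add t s, add_comm s t]
  ext ξ
  rw [smul_apply, mul_apply_eq_comp, mul_apply_eq_comp, hT, hT]
  exact (V t).map_fourierCoeffTwoPi_of_periodic
    ((hV.continuous_conj_apply x _).intervalIntegrable _ _)
    (fun s => by simp only [hV.periodic s]) fun s => congr($(hshift s) ξ)

end IsPeriodicUnitaryGroup

end Hilbert

/-- the `n`-th Fourier component `x_n` of `x ∈ M` (defined by the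
Bochner integral `x_n ξ = (1/2π)∫₀^{2π} e^{-ins} V(s) x V(s)* ξ ds`) is a
bounded operator in `M`, satisfies `V(t) x_n V(t)* = e^{int} x_n`, and its
matrix elements are `E(l) x_n E(k) = E(l) x E(k)` for `l − k = n`, `0` otherwise. -/
theorem stmt12
    {H : Type*}
    [NormedAddCommGroup H] [InnerProductSpace ℂ H] [CompleteSpace H]
    (M : VonNeumannAlgebra H)
    (V : ℝ → (H →L[ℂ] H))
    (hV_unitary : ∀ t, V t ∈ unitary (H →L[ℂ] H))
    (hV_grp : ∀ s t : ℝ, V s * V t = V (s + t))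
    (hV_zero : V 0 = 1)
    (hV_per : V (2 * Real.pi) = 1)
    (hV_cont : ∀ ξ : H, Continuous fun t : ℝ => V t ξ)
    (hV_inv : ∀ t : ℝ, (fun x : H →L[ℂ] H => V t * x * star (V t)) ''
      (M : Set (H →L[ℂ] H)) = (M : Set (H →L[ℂ] H)))
    (E : ℤ → (H →L[ℂ] H))
    (hE_def : ∀ (n : ℤ) (ξ : H), E n ξ = (2 * (Real.pi : ℂ))⁻¹ •
      ∫ s in (0:ℝ)..(2 * Real.pi),
        Complex.exp (-(Complex.I * (n : ℂ) * (s : ℂ))) • V s ξ)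
    :
    ∀ x ∈ M, ∀ n : ℤ, ∃ xn : H →L[ℂ] H,
      (∀ ξ : H, xn ξ = (2 * (Real.pi : ℂ))⁻¹ •
        ∫ s in (0:ℝ)..(2 * Real.pi),
          Complex.exp (-(Complex.I * (n : ℂ) * (s : ℂ))) • ((V s * x * star (V s)) ξ)) ∧
      xn ∈ M ∧
      (∀ t : ℝ, V t * xn * star (V t) =
        Complex.exp (Complex.I * (n : ℂ) * (t : ℂ)) • xn) ∧
      (∀ l k : ℤ,
        (l - k = n → E l * xn * E k = E l * x * E k) ∧
        (l - k ≠ n → E l * xn * E k = 0)) := by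
  intro x hx n
  have hV : IsPeriodicUnitaryGroup V := ⟨hV_unitary, hV_grp, hV_zero, hV_per, hV_cont⟩
  have hE (m : ℤ) (η : H) : E m η = fourierCoeffTwoPi m fun s => V s η := hE_def m η
  have hA_int (ξ : H) :
      IntervalIntegrable (fun s => (V s * x * star (V s)) ξ) volume 0 (2 * π) :=
    (hV.continuous_conj_apply x ξ).intervalIntegrable _ _
  obtain ⟨xn, hxn⟩ := exists_eq_fourierCoeffTwoPi_apply (fun s => V s * x * star (V s)) hA_int
    (fun s => (norm_conj_of_mem_unitary (hV_unitary s) x).le) n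
  have hEE (a m : ℤ) (η : H) : E a (E m η) = if a = m then E m η else 0 := by
    simp only [hE, hV.fourierCoeffTwoPi_orbit_orbit]
  have hxnE (k : ℤ) (ξ : H) : xn (E k ξ) = E (n + k) (x (E k ξ)) := by
    simp only [hxn, hE, hV.fourierCoeffTwoPi_conj_apply_orbit]
  refine ⟨xn, hxn, M.mem_of_eq_fourierCoeffTwoPi_apply hA_int hxn
    fun s => (hV_inv s).subset (Set.mem_image_of_mem _ hx),
    hV.conj_eq_smul_of_eq_fourierCoeffTwoPi_apply x hxn,
    fun l k => ⟨fun hlk => ?_, fun hlk => ?_⟩⟩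
  · ext ξ
    simp only [mul_apply_eq_comp]
    rw [hxnE, show n + k = l by omega, hEE, if_pos rfl]
  · ext ξ
    simp only [mul_apply_eq_comp, zero_apply]
    rw [hxnE, hEE, if_neg (by omega)]
end
end
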